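/- Let $\nu = (p_1/q, \ldots, p_d/q)^T$ with positive integers $p_i < q$, $\gcd(p_1,\ldots,p_d,q) = 1$, and let $L_\nu = \mathbb{Z}^d + \mathbb{Z}\nu$. Then the first successive minimum satisfies $\lambda_1(L_\nu) \geq \frac{1}{2^{d-1} q \, \tau(L_\nu)^{d-1}}$. -/

import Mathlib

/-- The set `L_ν = ℤ^d + ℤν`. -/
def latticeNu (d : ℕ) (ν : EuclideanSpace ℝ (Fin d)) : Set (EuclideanSpace ℝ (Fin d)) :=
  {x | ∃ (z : Fin d → ℤ) (t : ℤ), ∀ i, x i = (z i : ℝ) + (t : ℝ) * ν i}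

/-- The covering radius of a subset `L ⊆ ℝ^d` (Euclidean norm). -/
noncomputable def covRad (d : ℕ) (L : Set (EuclideanSpace ℝ (Fin d))) : ℝ :=
  sInf {σ : ℝ | 0 < σ ∧ ∀ x : EuclideanSpace ℝ (Fin d), ∃ y ∈ L, dist x y ≤ σ}

/-- The first successive minimum of a subset of `ℝ^d` (Euclidean norm). -/
noncomputable def firstMin (d : ℕ) (L : Set (EuclideanSpace ℝ (Fin d))) : ℝ :=
  sInf {r : ℝ | ∃ x ∈ L, x ≠ 0 ∧ ‖x‖ = r}

/-!
Extend a nonzero `x ∈ L_ν` to `d` linearly independent vectors of `L_ν`, the others of length at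
most `R` for a given `R > 2τ` (Jarník): if `σ < R / 2` is a covering radius, a point of norm
`R - σ > σ` orthogonal to the current span has a lattice point within `σ`, which by Pythagoras lies
outside the span and has length at most `R`.
Writing the rows as `zᵢ + tᵢ ν` with `ν = p / q`, the number `q · det` is the determinant of the
integer matrix `[[q, pᵀ], [-t, Z]]`, so a nonzero determinant has `|det| ≥ 1 / q`, while Hadamard's
inequality bounds `|det|` by `‖x‖ R^(d-1)`. Letting `R ↓ 2τ` gives the claim.
-/

open Module Matrix

namespace Matrix

variable {n K : Type*} [Fintype n] [DecidableEq n] [Field K]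

/-- The Schur complement of the corner entry `c` of the bordered matrix on the right is
`D + c⁻¹ u wᵀ`. -/
theorem mul_det_add_vecMulVec_inv_smul (c : K) (hc : c ≠ 0) (D : Matrix n n K) (u w : n → K) :
    c * (D + vecMulVec u (c⁻¹ • w)).det =
      (fromBlocks (of fun _ _ => c : Matrix Unit Unit K) (replicateRow Unit w)
        (-replicateCol Unit u) D).det := by
  have hfactor : fromBlocks (of fun _ _ => c : Matrix Unit Unit K) (replicateRow Unit w)
      (-replicateCol Unit u) D = fromBlocks (of fun _ _ => c) 0 0 1 *
        fromBlocks 1 (replicateRow Unit (c⁻¹ • w)) (-replicateCol Unit u) D := by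
    rw [fromBlocks_multiply]
    congr 1 <;> ext <;> simp [Matrix.mul_apply, hc]
  rw [hfactor, det_mul, det_fromBlocks_zero₂₁, det_fromBlocks_one₁₁, det_unique (of fun _ _ => c),
    det_one, mul_one, Matrix.neg_mul, sub_neg_eq_add, vecMulVec_eq Unit]
  rfl

theorem exists_intCast_eq_mul_det_add_vecMulVec (Z : Matrix n n ℤ) (t p : n → ℤ) (q : ℤ)
    (hq : (q : K) ≠ 0) :
    ∃ N : ℤ, (q : K) * (Z.map Int.cast + vecMulVec (fun i => (t i : K))
      ((q : K)⁻¹ • fun j => (p j : K))).det = N :=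
  ⟨(fromBlocks (of fun _ _ => q) (replicateRow Unit p) (-replicateCol Unit t) Z).det, by
    rw [mul_det_add_vecMulVec_inv_smul _ hq, Int.cast_det, fromBlocks_map]
    congr 2
    ext
    simp⟩

end Matrix

theorem OrthonormalBasis.abs_det_le_prod_norm {E : Type*} [NormedAddCommGroup E]
    [InnerProductSpace ℝ E] {n : ℕ} (b : OrthonormalBasis (Fin n) ℝ E) (v : Fin n → E) :
    |b.toBasis.det v| ≤ ∏ i, ‖v i‖ := by
  have : Fact (finrank ℝ E = n) := ⟨by simpa using finrank_eq_card_basis b.toBasis⟩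
  rw [← b.toBasis.orientation.volumeForm_robust' b]
  exact Orientation.abs_volumeForm_apply_le _ v

section Covering

variable {E : Type*} [NormedAddCommGroup E] [InnerProductSpace ℝ E] [FiniteDimensional ℝ E]
  {L : Set E} {σ : ℝ}

theorem exists_mem_notMem_norm_le_of_forall_dist_le (hL : ∀ x : E, ∃ y ∈ L, dist x y ≤ σ)
    {V : Submodule ℝ E} (hV : V ≠ ⊤) {ρ : ℝ} (hρ : σ < ρ) :
    ∃ y ∈ L, y ∉ V ∧ ‖y‖ ≤ ρ + σ := by
  have hσ : 0 ≤ σ := by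
    obtain ⟨y, -, hy⟩ := hL 0
    exact dist_nonneg.trans hy
  have : Nontrivial Vᗮ :=
    Submodule.nontrivial_iff_ne_bot.2 (by rwa [Ne, Submodule.orthogonal_eq_bot_iff])
  obtain ⟨⟨x, hxV⟩, hx⟩ := exists_norm_eq Vᗮ (c := ρ) (by linarith)
  replace hx : ‖x‖ = ρ := hx
  obtain ⟨y, hyL, hxy⟩ := hL x
  refine ⟨y, hyL, fun hyV => ?_, ?_⟩
  · have hpyth : dist x y * dist x y = ρ * ρ + ‖y‖ * ‖y‖ := by
      rw [dist_eq_norm, ← hx]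
      exact norm_sub_sq_eq_norm_sq_add_norm_sq_real (Submodule.inner_left_of_mem_orthogonal hyV hxV)
    nlinarith [dist_nonneg (x := x) (y := y)]
  · rw [dist_comm] at hxy
    simpa [hx] using norm_le_norm_add_const_of_dist_le hxy

theorem exists_linearIndependent_cons_of_forall_dist_le (hL : ∀ x : E, ∃ y ∈ L, dist x y ≤ σ)
    {R : ℝ} (hR : 2 * σ < R) {x : E} (hx : x ≠ 0) :
    ∀ k < finrank ℝ E, ∃ w : Fin k → E, (∀ i, w i ∈ L ∧ ‖w i‖ ≤ R) ∧
      LinearIndependent ℝ (Fin.cons x w : Fin (k + 1) → E)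
  | 0, _ => ⟨Fin.elim0, fun i => i.elim0, by simp [hx]⟩
  | k + 1, hk => by
    obtain ⟨w, hw, hli⟩ := exists_linearIndependent_cons_of_forall_dist_le hL hR hx k (by omega)
    have hspan : Submodule.span ℝ (Set.range (Fin.cons x w : Fin (k + 1) → E)) ≠ ⊤ := by
      intro htop
      have := finrank_span_eq_card hli
      rw [htop, finrank_top, Fintype.card_fin] at this
      omega
    obtain ⟨y, hyL, hyV, hy⟩ :=
      exists_mem_notMem_norm_le_of_forall_dist_le hL hspan (ρ := R - σ) (by linarith)
    refine ⟨Fin.snoc w y, Fin.lastCases ⟨by simpa using hyL, by simpa using hy⟩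
      (by simpa using hw), ?_⟩
    rw [Fin.cons_snoc_eq_snoc_cons, linearIndependent_finSnoc]
    exact ⟨hli, hyV⟩

end Covering

section LatticeNu

variable {d : ℕ} {ν : EuclideanSpace ℝ (Fin d)}

theorem intVec_mem_latticeNu (z : Fin d → ℤ) : WithLp.toLp 2 (fun i => (z i : ℝ)) ∈ latticeNu d ν :=
  ⟨z, 0, fun i => by simp⟩

theorem exists_mem_latticeNu_dist_le_sqrt (x : EuclideanSpace ℝ (Fin d)) :
    ∃ y ∈ latticeNu d ν, dist x y ≤ √d := by
  refine ⟨_, intVec_mem_latticeNu fun i => round (x i), ?_⟩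
  rw [EuclideanSpace.dist_eq]
  refine Real.sqrt_le_sqrt ((Finset.sum_le_card_nsmul _ _ 1 fun i _ => ?_).trans (by simp))
  have := abs_sub_round (x i)
  rw [Real.dist_eq]
  nlinarith [abs_nonneg (x i - round (x i)), sq_abs (x i - round (x i))]

theorem covRad_nonneg (L : Set (EuclideanSpace ℝ (Fin d))) : 0 ≤ covRad d L :=
  Real.sInf_nonneg fun _ hσ => hσ.1.le

theorem exists_forall_dist_le_of_covRad_latticeNu_lt (hd : 0 < d) {s : ℝ}
    (hs : covRad d (latticeNu d ν) < s) : ∃ σ < s, ∀ x, ∃ y ∈ latticeNu d ν, dist x y ≤ σ := by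
  obtain ⟨σ, hσ, hσs⟩ := exists_lt_of_csInf_lt
    (s := {σ : ℝ | 0 < σ ∧ ∀ x, ∃ y ∈ latticeNu d ν, dist x y ≤ σ})
    ⟨√d, Real.sqrt_pos.2 (by exact_mod_cast hd), exists_mem_latticeNu_dist_le_sqrt⟩ hs
  exact ⟨σ, hσs, hσ.2⟩

variable {q : ℕ} {p : Fin d → ℕ}

theorem exists_intCast_eq_mul_det_of_mem_latticeNu (hq : 0 < q) (hν : ∀ i, ν i = p i / q)
    {v : Fin d → EuclideanSpace ℝ (Fin d)} (hv : ∀ i, v i ∈ latticeNu d ν) :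
    ∃ N : ℤ, q * (EuclideanSpace.basisFun (Fin d) ℝ).toBasis.det v = N := by
  choose z t hzt using hv
  obtain ⟨N, hN⟩ := exists_intCast_eq_mul_det_add_vecMulVec (K := ℝ) (of z) t (fun j => p j) q
    (by positivity)
  refine ⟨N, ?_⟩
  rw [← hN, Basis.det_apply, ← det_transpose]
  congr 3
  ext i j
  simp [Basis.toMatrix_apply, hzt, hν, vecMulVec_apply, div_eq_inv_mul, mul_left_comm]

theorem inv_le_abs_det_of_mem_latticeNu (hq : 0 < q) (hν : ∀ i, ν i = p i / q)
    {v : Fin d → EuclideanSpace ℝ (Fin d)} (hv : ∀ i, v i ∈ latticeNu d ν)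
    (hli : LinearIndependent ℝ v) :
    (q : ℝ)⁻¹ ≤ |(EuclideanSpace.basisFun (Fin d) ℝ).toBasis.det v| := by
  obtain ⟨N, hN⟩ := exists_intCast_eq_mul_det_of_mem_latticeNu hq hν hv
  have hdet : (EuclideanSpace.basisFun (Fin d) ℝ).toBasis.det v ≠ 0 := by
    simpa using ((EuclideanSpace.basisFun (Fin d) ℝ).toBasis.isUnit_det
      (basisOfLinearIndependentOfCardEqFinrank' v hli (by simp))).ne_zero
  have hN0 : N ≠ 0 := by
    rintro rfl
    simp [hq.ne', hdet] at hN
  have hqR : (0 : ℝ) < q := by exact_mod_cast hq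
  rw [inv_le_iff_one_le_mul₀' hqR, ← abs_of_pos hqR, ← abs_mul, hN]
  exact_mod_cast Int.one_le_abs hN0

end LatticeNu

section PositiveDimension

variable {m q : ℕ} {p : Fin (m + 1) → ℕ} {ν : EuclideanSpace ℝ (Fin (m + 1))}
  {x : EuclideanSpace ℝ (Fin (m + 1))}

theorem inv_le_norm_mul_pow_of_two_mul_covRad_lt (hq : 0 < q) (hν : ∀ i, ν i = p i / q)
    (hx : x ∈ latticeNu (m + 1) ν) (hx0 : x ≠ 0) {R : ℝ}
    (hR : 2 * covRad (m + 1) (latticeNu (m + 1) ν) < R) :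
    (q : ℝ)⁻¹ ≤ ‖x‖ * R ^ m := by
  obtain ⟨σ, hσR, hcov⟩ :=
    exists_forall_dist_le_of_covRad_latticeNu_lt m.succ_pos (ν := ν) (s := R / 2) (by linarith)
  obtain ⟨w, hw, hli⟩ := exists_linearIndependent_cons_of_forall_dist_le hcov
    (by linarith : 2 * σ < R) hx0 m (by simp)
  have hv : ∀ i, (Fin.cons x w : Fin (m + 1) → _) i ∈ latticeNu (m + 1) ν :=
    Fin.cases hx fun i => (hw i).1
  calc (q : ℝ)⁻¹ ≤ |(EuclideanSpace.basisFun _ ℝ).toBasis.det (Fin.cons x w)| :=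
        inv_le_abs_det_of_mem_latticeNu hq hν hv hli
    _ ≤ ∏ i, ‖(Fin.cons x w : Fin (m + 1) → _) i‖ := OrthonormalBasis.abs_det_le_prod_norm _ _
    _ = ‖x‖ * ∏ i, ‖w i‖ := by simp [Fin.prod_univ_succ]
    _ ≤ ‖x‖ * ∏ _i : Fin m, R := by
        gcongr with i
        exact (hw i).2
    _ = ‖x‖ * R ^ m := by simp

theorem inv_le_norm_mul_two_mul_covRad_pow (hq : 0 < q) (hν : ∀ i, ν i = p i / q)
    (hx : x ∈ latticeNu (m + 1) ν) (hx0 : x ≠ 0) :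
    (q : ℝ)⁻¹ ≤ ‖x‖ * (2 * covRad (m + 1) (latticeNu (m + 1) ν)) ^ m := by
  set τ := covRad (m + 1) (latticeNu (m + 1) ν)
  have hclosed : IsClosed {R : ℝ | (q : ℝ)⁻¹ ≤ ‖x‖ * R ^ m} :=
    isClosed_le continuous_const (by fun_prop)
  have hmem : 2 * τ ∈ closure (Set.Ioi (2 * τ)) := by
    rw [closure_Ioi]
    exact Set.mem_Ici.2 le_rfl
  exact hclosed.closure_subset_iff.2
    (fun R hR => inv_le_norm_mul_pow_of_two_mul_covRad_lt hq hν hx hx0 hR) hmem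

end PositiveDimension

theorem firstMin_latticeNu_lower_general (d : ℕ) (hd : 1 ≤ d) (p : Fin d → ℕ) (q : ℕ)
    (hq : ∀ i, p i < q)
    (ν : EuclideanSpace ℝ (Fin d)) (hν : ∀ i, ν i = (p i : ℝ) / (q : ℝ)) :
    firstMin d (latticeNu d ν)
      ≥ 1 / (2 ^ (d - 1) * (q : ℝ) * covRad d (latticeNu d ν) ^ (d - 1)) := by
  obtain ⟨m, rfl⟩ : ∃ m, d = m + 1 := ⟨d - 1, by omega⟩
  have hq0 : 0 < q := (Nat.zero_le _).trans_lt (hq 0)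
  have hτ := covRad_nonneg (latticeNu (m + 1) ν)
  refine le_csInf ⟨_, _, intVec_mem_latticeNu 1, fun h => ?_, rfl⟩ ?_
  · simpa using congrArg (· 0) h
  rintro _ ⟨x, hx, hx0, rfl⟩
  calc 1 / (2 ^ (m + 1 - 1) * (q : ℝ) * covRad (m + 1) (latticeNu (m + 1) ν) ^ (m + 1 - 1))
      = (q : ℝ)⁻¹ / (2 * covRad (m + 1) (latticeNu (m + 1) ν)) ^ m := by
        rw [Nat.add_sub_cancel, mul_pow]
        ring
    _ ≤ ‖x‖ := div_le_of_le_mul₀ (by positivity) (norm_nonneg x)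
        (inv_le_norm_mul_two_mul_covRad_pow hq0 hν hx hx0)

/-- `λ₁(L_ν) ≥ 1 / (2^{d-1} q τ(L_ν)^{d-1})`. -/
theorem firstMin_latticeNu_lower (d : ℕ) (hd : 1 ≤ d) (p : Fin d → ℕ) (q : ℕ)
    (hp : ∀ i, 0 < p i) (hq : ∀ i, p i < q)
    (hgcd : Nat.gcd (Finset.univ.gcd p) q = 1)
    (ν : EuclideanSpace ℝ (Fin d)) (hν : ∀ i, ν i = (p i : ℝ) / (q : ℝ)) :
    firstMin d (latticeNu d ν)
      ≥ 1 / (2 ^ (d - 1) * (q : ℝ) * covRad d (latticeNu d ν) ^ (d - 1)) :=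
  firstMin_latticeNu_lower_general d hd p q hq ν hν
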